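/- arXiv:2201.00001 — 3 statements merged into one kernel-verified Lean document; each statement's English description precedes it below -/
import Mathlib

section
/- Let n be a positive integer and consider a directed weighted graph on n nodes with nonnegative weight matrix W (W i j ≥ 0 for all i, j). Then every complex eigenvalue of the graph advection operator L_adv has nonnegative real part: if x ∈ ℂⁿ is nonzero and (L_adv regarded as a complex matrix) satisfies L_adv x = μ x for some μ ∈ ℂ, then Re(μ) ≥ 0. -/
open Matrix BigOperators

/-- Graph advection operator `L_adv = D_out - A_in`, where `A_in = W` and
`(D_out) i i = ∑ j, W j i`. -/
def Ladv (n : ℕ) (W : Matrix (Fin n) (Fin n) ℝ) : Matrix (Fin n) (Fin n) ℝ :=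
  Matrix.diagonal (fun i => ∑ j, W j i) - W

/-!
Each column of `L_adv` sums to zero and its off-diagonal entries are `≤ 0`, so the diagonal entry
`∑_{j ≠ k} W j k` of column `k` equals the sum of the moduli of the other entries of that column.
Gershgorin's theorem for columns (i.e. for the transpose, which has the same eigenvalues) then puts
every eigenvalue in a disc `|z - r| ≤ r` with `r ≥ 0`, which lies in the closed right half-plane.
-/

namespace Matrix

variable {n : Type*} [Fintype n] [DecidableEq n]

theorem hasEigenvalue_toLin'_transpose {R : Type*} [CommRing R] [IsDomain R]
    {A : Matrix n n R} {μ : R} :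
    Module.End.HasEigenvalue (toLin' Aᵀ) μ ↔ Module.End.HasEigenvalue (toLin' A) μ := by
  simp only [Module.End.hasEigenvalue_iff_isRoot_charpoly, charpoly_toLin', charpoly_transpose]

theorem eigenvalue_mem_ball_col {K : Type*} [NormedField K] {A : Matrix n n K} {μ : K}
    (hμ : Module.End.HasEigenvalue (toLin' A) μ) :
    ∃ k, μ ∈ Metric.closedBall (A k k) (∑ j ∈ Finset.univ.erase k, ‖A j k‖) :=
  eigenvalue_mem_ball (A := Aᵀ) (hasEigenvalue_toLin'_transpose.mpr hμ)

theorem re_nonneg_of_hasEigenvalue_of_sum_col_le_re {A : Matrix n n ℂ} {μ : ℂ}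
    (hA : ∀ k, ∑ j ∈ Finset.univ.erase k, ‖A j k‖ ≤ (A k k).re)
    (hμ : Module.End.HasEigenvalue (toLin' A) μ) : 0 ≤ μ.re := by
  obtain ⟨k, hk⟩ := eigenvalue_mem_ball_col hμ
  have hre : |μ.re - (A k k).re| ≤ (A k k).re :=
    calc |μ.re - (A k k).re| = |(μ - A k k).re| := by rw [Complex.sub_re]
      _ ≤ ‖μ - A k k‖ := Complex.abs_re_le_norm _
      _ ≤ ∑ j ∈ Finset.univ.erase k, ‖A j k‖ := mem_closedBall_iff_norm.mp hk
      _ ≤ (A k k).re := hA k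
  linarith [neg_abs_le (μ.re - (A k k).re)]

end Matrix

theorem Ladv_apply_self (n : ℕ) (W : Matrix (Fin n) (Fin n) ℝ) (k : Fin n) :
    Ladv n W k k = ∑ j ∈ Finset.univ.erase k, W j k := by
  rw [Ladv, Matrix.sub_apply, diagonal_apply_eq, ← Finset.add_sum_erase _ _ (Finset.mem_univ k),
    add_sub_cancel_left]

theorem Ladv_apply_of_ne (n : ℕ) (W : Matrix (Fin n) (Fin n) ℝ) {j k : Fin n} (h : j ≠ k) :
    Ladv n W j k = -W j k := by
  rw [Ladv, Matrix.sub_apply, diagonal_apply_ne _ h, zero_sub]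

theorem sum_erase_norm_map_ofReal_Ladv_eq_re (n : ℕ) (W : Matrix (Fin n) (Fin n) ℝ)
    (hW : ∀ i j, 0 ≤ W i j) (k : Fin n) :
    ∑ j ∈ Finset.univ.erase k, ‖(Ladv n W).map Complex.ofReal j k‖
      = ((Ladv n W).map Complex.ofReal k k).re := by
  rw [map_apply, Complex.ofReal_re, Ladv_apply_self]
  refine Finset.sum_congr rfl fun j hj => ?_
  rw [map_apply, Ladv_apply_of_ne n W (Finset.ne_of_mem_erase hj), Complex.norm_real,
    Real.norm_eq_abs, abs_neg, abs_of_nonneg (hW j k)]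

theorem stmt4_general (n : ℕ) (W : Matrix (Fin n) (Fin n) ℝ)
    (hW : ∀ i j, 0 ≤ W i j) (μ : ℂ) (x : Fin n → ℂ) (hx : x ≠ 0)
    (heig : (Ladv n W).map (Complex.ofReal) *ᵥ x = μ • x) :
    0 ≤ μ.re := by
  have hvec : Module.End.HasEigenvector (toLin' ((Ladv n W).map Complex.ofReal)) μ x :=
    ⟨by rwa [Module.End.mem_eigenspace_iff, toLin'_apply], hx⟩
  exact re_nonneg_of_hasEigenvalue_of_sum_col_le_re
    (fun k => (sum_erase_norm_map_ofReal_Ladv_eq_re n W hW k).le)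
    (Module.End.hasEigenvalue_of_hasEigenvector hvec)

/-- For nonnegative weights, every complex eigenvalue of `L_adv` (regarded as a
complex matrix via `ℝ → ℂ`) has nonnegative real part. -/
theorem stmt4 (n : ℕ) (hn : 0 < n) (W : Matrix (Fin n) (Fin n) ℝ)
    (hW : ∀ i j, 0 ≤ W i j) (μ : ℂ) (x : Fin n → ℂ) (hx : x ≠ 0)
    (heig : (Ladv n W).map (Complex.ofReal) *ᵥ x = μ • x) :
    0 ≤ μ.re :=
  stmt4_general n W hW μ x hx heig
end

section
/- Let n be a positive integer and consider a directed weighted graph on n nodes with nonnegative weight matrix W. If the graph is balanced (D_out = D_in), then the symmetrized advection operator L_sym = (L_adv + L_advᵀ)/2 is positive semidefinite: for every x ∈ ℝⁿ, xᵀ L_sym x ≥ 0. -/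
open Matrix BigOperators

/-- Symmetrized advection operator `L_sym = (L_adv + L_advᵀ)/2`. -/
noncomputable def Lsym (n : ℕ) (W : Matrix (Fin n) (Fin n) ℝ) : Matrix (Fin n) (Fin n) ℝ :=
  (1 / 2 : ℝ) • (Ladv n W + (Ladv n W)ᵀ)

/-- If the weights are nonnegative and the graph is balanced (`D_out = D_in`), then the
symmetrized advection operator is positive semidefinite. -/
theorem stmt5 (n : ℕ) (hn : 0 < n) (W : Matrix (Fin n) (Fin n) ℝ)
    (hW : ∀ i j, 0 ≤ W i j)
    (hbal : Matrix.diagonal (fun i => ∑ j, W j i)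
      = Matrix.diagonal (fun i => ∑ j, W i j)) :
    ∀ x : Fin n → ℝ, 0 ≤ x ⬝ᵥ (Lsym n W *ᵥ x) := by
  intro x
  have hbal' : ∀ i, (∑ j, W j i) = ∑ j, W i j := by
    intro i
    have := congrFun (congrFun hbal i) i
    simpa [Matrix.diagonal] using this
  have htrans : x ⬝ᵥ ((Ladv n W)ᵀ *ᵥ x) = x ⬝ᵥ (Ladv n W *ᵥ x) := by
    rw [Matrix.dotProduct_mulVec, Matrix.vecMul_transpose, dotProduct_comm,
      Matrix.dotProduct_mulVec]
  have hsym : x ⬝ᵥ (Lsym n W *ᵥ x) = x ⬝ᵥ (Ladv n W *ᵥ x) := by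
    simp only [Lsym, Matrix.smul_mulVec, Matrix.add_mulVec, dotProduct_smul,
      dotProduct_add, htrans, smul_eq_mul]
    ring
  rw [hsym]
  have hq : x ⬝ᵥ (Ladv n W *ᵥ x)
      = ∑ i, (∑ j, W j i) * x i ^ 2 - ∑ i, ∑ j, W i j * x j * x i := by
    simp only [Ladv, Matrix.sub_mulVec, dotProduct_sub]
    congr 1
    · simp only [dotProduct, Matrix.mulVec_diagonal]
      exact Finset.sum_congr rfl fun i _ => by ring
    · simp only [dotProduct, Matrix.mulVec]
      refine Finset.sum_congr rfl fun i _ => ?_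
      rw [Finset.mul_sum]
      exact Finset.sum_congr rfl fun j _ => by ring
  have key : 2 * (x ⬝ᵥ (Ladv n W *ᵥ x)) = ∑ i, ∑ j, W i j * (x i - x j) ^ 2 := by
    have hswap : ∑ i, (∑ j, W i j) * x i ^ 2 = ∑ i, (∑ j, W j i) * x i ^ 2 :=
      Finset.sum_congr rfl fun i _ => by rw [hbal' i]
    calc 2 * (x ⬝ᵥ (Ladv n W *ᵥ x))
        = ∑ i, ((∑ j, W j i) * x i ^ 2 + (∑ j, W i j) * x i ^ 2
            - 2 * ∑ j, W i j * x j * x i) := by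
          rw [hq, Finset.sum_sub_distrib, Finset.sum_add_distrib, hswap, ← Finset.mul_sum]
          ring
      _ = ∑ i, ∑ j, (W j i * x i ^ 2 + W i j * x i ^ 2 - 2 * (W i j * x j * x i)) := by
          refine Finset.sum_congr rfl fun i _ => ?_
          rw [Finset.sum_sub_distrib, Finset.sum_add_distrib, Finset.sum_mul,
            Finset.sum_mul, ← Finset.mul_sum, Finset.mul_sum]
      _ = ∑ i, ∑ j, (W i j * x i ^ 2 - 2 * (W i j * x j * x i))
            + ∑ i, ∑ j, W j i * x i ^ 2 := by
          rw [← Finset.sum_add_distrib]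
          refine Finset.sum_congr rfl fun i _ => ?_
          rw [← Finset.sum_add_distrib]
          exact Finset.sum_congr rfl fun j _ => by ring
      _ = ∑ i, ∑ j, (W i j * x i ^ 2 - 2 * (W i j * x j * x i))
            + ∑ i, ∑ j, W i j * x j ^ 2 := by
          rw [Finset.sum_comm (f := fun i j => W j i * x i ^ 2)]
      _ = ∑ i, ∑ j, W i j * (x i - x j) ^ 2 := by
          rw [← Finset.sum_add_distrib]
          refine Finset.sum_congr rfl fun i _ => ?_
          rw [← Finset.sum_add_distrib]
          exact Finset.sum_congr rfl fun j _ => by ring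
  have hnn : 0 ≤ ∑ i, ∑ j, W i j * (x i - x j) ^ 2 :=
    Finset.sum_nonneg fun i _ => Finset.sum_nonneg fun j _ =>
      mul_nonneg (hW i j) (sq_nonneg _)
  linarith
end

section
/- Let n ≥ 3, v > 0 and Δx > 0, and consider the directed line graph on nodes 0, 1, …, n−1 whose only edges are i → i+1 with weight v/Δx for 0 ≤ i ≤ n−2. Then for every vector u ∈ ℝⁿ and every interior node i with 1 ≤ i ≤ n−2, the graph advection operator satisfies (L_adv u)_i = v (u_i − u_{i−1}) / Δx; that is, applying L_adv on this graph reproduces the spatial part of the first order upwind finite difference scheme for linear advection with velocity v > 0. -/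
open Matrix BigOperators

/-- Weight matrix of the directed line graph: the only edges are `i → i+1`, each
with weight `v/Δx` (here `W i j` is the weight of the edge from `j` to `i`). -/
noncomputable def lineW (n : ℕ) (v Δx : ℝ) : Matrix (Fin n) (Fin n) ℝ :=
  fun i j => if (i : ℕ) = (j : ℕ) + 1 then v / Δx else 0

/-- On the directed line graph, `L_adv` reproduces the spatial part of the first order
upwind finite difference scheme `(L_adv u)_i = v (u_i - u_{i-1}) / Δx` at every
interior node. -/
theorem stmt7 (n : ℕ) (hn : 3 ≤ n) (v Δx : ℝ) (hv : 0 < v) (hΔx : 0 < Δx)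
    (u : Fin n → ℝ) (i : Fin n) (h1 : 1 ≤ (i : ℕ)) (h2 : (i : ℕ) ≤ n - 2) :
    (Ladv n (lineW n v Δx) *ᵥ u) i
      = v * (u i - u ⟨(i : ℕ) - 1, lt_of_le_of_lt (Nat.sub_le _ _) i.isLt⟩) / Δx := by
  have hi1 : (i : ℕ) + 1 < n := by omega
  set i' : Fin n := ⟨(i : ℕ) - 1, lt_of_le_of_lt (Nat.sub_le _ _) i.isLt⟩
  have hd : (∑ j, lineW n v Δx j i) = v / Δx := by
    rw [Finset.sum_eq_single (⟨(i : ℕ) + 1, hi1⟩ : Fin n)]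
    · simp [lineW]
    · intro j _ hj
      simp only [lineW, ite_eq_right_iff]
      intro hji
      exact absurd (Fin.ext hji) hj
    · simp
  have hrow : (∑ j, lineW n v Δx i j * u j) = (v / Δx) * u i' := by
    rw [Finset.sum_eq_single i']
    · simp only [lineW, i']; rw [if_pos (by omega)]
    · intro j _ hj
      simp only [lineW, ite_eq_right_iff, mul_eq_zero]
      refine Or.inl fun hji => ?_
      exact (hj (Fin.ext (show (j : ℕ) = (i : ℕ) - 1 by omega))).elim
    · simp
  have hW : (lineW n v Δx *ᵥ u) i = ∑ j, lineW n v Δx i j * u j := rfl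
  rw [Ladv, Matrix.sub_mulVec, Pi.sub_apply, Matrix.mulVec_diagonal, hW, hd, hrow]
  field_simp
end
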